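/- Let P ∈ ℝ^{n×r}, Q ∈ ℝ^{ℓ×n}, R ∈ ℝ^{ℓ×r}, B ∈ ℝ^{n×m}, C ∈ ℝ^{p×n}, D ∈ ℝ^{p×m}. Define the sequence of subspaces 𝒥₀ := ℝ^r and 𝒥_{t+1} := { v ∈ ℝ^r : ∃ η ∈ ℝ^m with Rv + QBη ∈ QP(𝒥_t) and CPv + Dη = 0 } for t ∈ ℕ. Then the sequence (𝒥_t) is nonincreasing, and 𝒥_r satisfies inclusion (13) and contains every subspace of ℝ^r satisfying inclusion (13); i.e., the largest subspace satisfying inclusion (13) is reached after at most r steps of this iteration. -/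
import Mathlib


open Matrix

/-- A set S ⊆ ℝʳ satisfies inclusion (13): for every v ∈ S there is η with
Rv + QBη ∈ QP(S) and CPv + Dη = 0. -/
def Incl13Set {n r l m p : ℕ} (P : Matrix (Fin n) (Fin r) ℝ) (Q : Matrix (Fin l) (Fin n) ℝ)
    (R : Matrix (Fin l) (Fin r) ℝ) (B : Matrix (Fin n) (Fin m) ℝ)
    (C : Matrix (Fin p) (Fin n) ℝ) (D : Matrix (Fin p) (Fin m) ℝ)
    (S : Set (Fin r → ℝ)) : Prop :=
  ∀ v ∈ S, ∃ η : Fin m → ℝ,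
    R.mulVec v + (Q * B).mulVec η ∈ (Q * P).mulVec '' S ∧
    (C * P).mulVec v + D.mulVec η = 0

/-- The iteration 𝒥₀ = ℝʳ, 𝒥_{t+1} = { v : ∃ η, Rv + QBη ∈ QP(𝒥_t) and CPv + Dη = 0 }. -/
def Jseq {n r l m p : ℕ} (P : Matrix (Fin n) (Fin r) ℝ) (Q : Matrix (Fin l) (Fin n) ℝ)
    (R : Matrix (Fin l) (Fin r) ℝ) (B : Matrix (Fin n) (Fin m) ℝ)
    (C : Matrix (Fin p) (Fin n) ℝ) (D : Matrix (Fin p) (Fin m) ℝ) :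
    ℕ → Set (Fin r → ℝ)
  | 0 => Set.univ
  | t + 1 => {v | ∃ η : Fin m → ℝ,
      R.mulVec v + (Q * B).mulVec η ∈ (Q * P).mulVec '' Jseq P Q R B C D t ∧
      (C * P).mulVec v + D.mulVec η = 0}

section Aux
variable {n r l m p : ℕ} (P : Matrix (Fin n) (Fin r) ℝ) (Q : Matrix (Fin l) (Fin n) ℝ)
    (R : Matrix (Fin l) (Fin r) ℝ) (B : Matrix (Fin n) (Fin m) ℝ)
    (C : Matrix (Fin p) (Fin n) ℝ) (D : Matrix (Fin p) (Fin m) ℝ)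

def nextS (J : Submodule ℝ (Fin r → ℝ)) : Submodule ℝ (Fin r → ℝ) where
  carrier := {v | ∃ η : Fin m → ℝ,
      R.mulVec v + (Q * B).mulVec η ∈ (Q * P).mulVec '' (J : Set (Fin r → ℝ)) ∧
      (C * P).mulVec v + D.mulVec η = 0}
  zero_mem' := ⟨0, ⟨0, J.zero_mem, by simp⟩, by simp⟩
  add_mem' := by
    rintro a b ⟨η₁, ⟨w₁, hw₁, hqe₁⟩, h₁⟩ ⟨η₂, ⟨w₂, hw₂, hqe₂⟩, h₂⟩
    refine ⟨η₁ + η₂, ⟨w₁ + w₂, J.add_mem hw₁ hw₂, ?_⟩, ?_⟩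
    · simp only [mulVec_add, hqe₁, hqe₂]; abel
    · simp only [mulVec_add]
      have : ((C * P).mulVec a + D.mulVec η₁) + ((C * P).mulVec b + D.mulVec η₂) = 0 := by
        rw [h₁, h₂]; simp
      rw [← this]; abel
  smul_mem' := by
    rintro c a ⟨η, ⟨w, hw, hqe⟩, h⟩
    refine ⟨c • η, ⟨c • w, J.smul_mem c hw, ?_⟩, ?_⟩
    · simp only [mulVec_smul, hqe]; rw [← smul_add]
    · simp only [mulVec_smul, ← smul_add, h, smul_zero]

def Nseq : ℕ → Submodule ℝ (Fin r → ℝ)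
  | 0 => ⊤
  | t + 1 => nextS P Q R B C D (Nseq t)

lemma Nseq_coe : ∀ t, ((Nseq P Q R B C D t : Submodule ℝ (Fin r → ℝ)) : Set (Fin r → ℝ))
    = Jseq P Q R B C D t
  | 0 => by simp [Nseq, Jseq]
  | t + 1 => by
      have := Nseq_coe t
      show {v | ∃ η : Fin m → ℝ, _ ∧ _} = _
      rw [Jseq]
      simp only [nextS, Nseq, this]

lemma Jseq_mono {S T : Set (Fin r → ℝ)} (h : S ⊆ T) (v : Fin r → ℝ)
    (hv : ∃ η : Fin m → ℝ,
      R.mulVec v + (Q * B).mulVec η ∈ (Q * P).mulVec '' S ∧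
      (C * P).mulVec v + D.mulVec η = 0) :
    ∃ η : Fin m → ℝ,
      R.mulVec v + (Q * B).mulVec η ∈ (Q * P).mulVec '' T ∧
      (C * P).mulVec v + D.mulVec η = 0 := by
  obtain ⟨η, hmem, hz⟩ := hv
  exact ⟨η, Set.image_mono h hmem, hz⟩

lemma Jseq_antitone : ∀ t : ℕ, Jseq P Q R B C D (t + 1) ⊆ Jseq P Q R B C D t
  | 0 => by intro v _; trivial
  | t + 1 => fun v hv => by
      obtain ⟨η, hm, hz⟩ := hv
      exact ⟨η, Set.image_mono (Jseq_antitone t) hm, hz⟩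

lemma Nseq_stable {s : ℕ} (h : Nseq P Q R B C D s = Nseq P Q R B C D (s + 1)) :
    ∀ t, s ≤ t → Nseq P Q R B C D t = Nseq P Q R B C D (t + 1) := by
  intro t hst
  induction t with
  | zero =>
    have hs0 : s = 0 := Nat.le_zero.mp hst
    rw [← hs0]; exact h
  | succ k ih =>
    rcases Nat.lt_or_ge s (k + 1) with hlt | hge
    · have := ih (by omega)
      show nextS P Q R B C D _ = nextS P Q R B C D _
      rw [this]
    · have : s = k + 1 := by omega
      rw [← this]; exact h

lemma Nseq_eq : Nseq P Q R B C D r = Nseq P Q R B C D (r + 1) := by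
  have hle : ∀ t, Nseq P Q R B C D (t + 1) ≤ Nseq P Q R B C D t := by
    intro t v hv
    have : v ∈ Jseq P Q R B C D (t + 1) := by rw [← Nseq_coe]; exact hv
    have := Jseq_antitone P Q R B C D t this
    rw [← Nseq_coe] at this; exact this
  -- either some stable step ≤ r, or finrank drops to 0
  have key : ∀ t : ℕ, (∃ s ≤ t, Nseq P Q R B C D s = Nseq P Q R B C D (s + 1)) ∨
      Module.finrank ℝ (Nseq P Q R B C D t) + t ≤ r := by
    intro t
    induction t with
    | zero =>
      right
      have h1 := Submodule.finrank_le (Nseq P Q R B C D 0)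
      have h2 : Module.finrank ℝ (Fin r → ℝ) = r := by simp
      omega
    | succ k ih =>
      rcases ih with ⟨s, hs, heq⟩ | hrk
      · exact Or.inl ⟨s, by omega, heq⟩
      · by_cases heq : Nseq P Q R B C D k = Nseq P Q R B C D (k + 1)
        · exact Or.inl ⟨k, by omega, heq⟩
        · right
          have hlt : Nseq P Q R B C D (k + 1) < Nseq P Q R B C D k :=
            lt_of_le_of_ne (hle k) (fun h => heq h.symm)
          have := Submodule.finrank_lt_finrank_of_lt hlt
          omega
  rcases key r with ⟨s, hs, heq⟩ | hrk
  · exact Nseq_stable P Q R B C D heq r hs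
  · have h0 : Module.finrank ℝ (Nseq P Q R B C D r) = 0 := by omega
    have hbot : Nseq P Q R B C D r = ⊥ := Submodule.finrank_eq_zero.mp h0
    have : Nseq P Q R B C D (r + 1) = ⊥ := le_bot_iff.mp (hbot ▸ hle r)
    rw [hbot, this]


lemma Incl_sub_Jseq (J : Set (Fin r → ℝ)) (hJ : Incl13Set P Q R B C D J) :
    ∀ t : ℕ, J ⊆ Jseq P Q R B C D t
  | 0 => fun v _ => trivial
  | t + 1 => fun v hv => by
      obtain ⟨η, hm, hz⟩ := hJ v hv
      exact ⟨η, Set.image_mono (Incl_sub_Jseq J hJ t) hm, hz⟩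

theorem Jseq_reaches_largest' :
    (∀ t : ℕ, Jseq P Q R B C D (t + 1) ⊆ Jseq P Q R B C D t) ∧
    (∃ Jstar : Submodule ℝ (Fin r → ℝ), (Jstar : Set (Fin r → ℝ)) = Jseq P Q R B C D r) ∧
    Incl13Set P Q R B C D (Jseq P Q R B C D r) ∧
    (∀ J : Submodule ℝ (Fin r → ℝ), Incl13Set P Q R B C D (J : Set (Fin r → ℝ)) →
      (J : Set (Fin r → ℝ)) ⊆ Jseq P Q R B C D r) := by
  have hJr : Jseq P Q R B C D r = Jseq P Q R B C D (r + 1) := by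
    rw [← Nseq_coe, ← Nseq_coe, Nseq_eq]
  refine ⟨Jseq_antitone P Q R B C D, ⟨Nseq P Q R B C D r, Nseq_coe P Q R B C D r⟩, ?_, ?_⟩
  · intro v hv
    rw [hJr] at hv
    exact hv
  · intro J hJ
    exact Incl_sub_Jseq P Q R B C D (J : Set (Fin r → ℝ)) hJ r

end Aux

/-- the iteration is nonincreasing and reaches, in at most r steps, the
largest subspace satisfying inclusion (13). -/
theorem Jseq_reaches_largest (n r l m p : ℕ)
    (P : Matrix (Fin n) (Fin r) ℝ) (Q : Matrix (Fin l) (Fin n) ℝ)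
    (R : Matrix (Fin l) (Fin r) ℝ)
    (B : Matrix (Fin n) (Fin m) ℝ) (C : Matrix (Fin p) (Fin n) ℝ)
    (D : Matrix (Fin p) (Fin m) ℝ) :
    (∀ t : ℕ, Jseq P Q R B C D (t + 1) ⊆ Jseq P Q R B C D t) ∧
    (∃ Jstar : Submodule ℝ (Fin r → ℝ), (Jstar : Set (Fin r → ℝ)) = Jseq P Q R B C D r) ∧
    Incl13Set P Q R B C D (Jseq P Q R B C D r) ∧
    (∀ J : Submodule ℝ (Fin r → ℝ), Incl13Set P Q R B C D (J : Set (Fin r → ℝ)) →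
      (J : Set (Fin r → ℝ)) ⊆ Jseq P Q R B C D r) := by
  exact Jseq_reaches_largest' P Q R B C D
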